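/- arXiv:2102.07329 — 9 statements merged into one kernel-verified Lean document; each statement's English description precedes it below -/
import Mathlib

section
/- The operation f₄(w,x,y,z) := f₃(f₂(f₂(w,x), f₂(y,z)), f₂(f₂(w,y), f₂(x,z)), f₂(f₂(w,z), f₂(x,y))) is symmetric, i.e., invariant under every permutation of its four arguments. -/
/-- The 4-ary operation built from a symmetric binary `f2` and a totally
symmetric ternary `f3`. -/
def F4 {D : Type*} (f2 : D → D → D) (f3 : D → D → D → D) (w x y z : D) : D :=
  f3 (f2 (f2 w x) (f2 y z)) (f2 (f2 w y) (f2 x z)) (f2 (f2 w z) (f2 x y))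

theorem stmt_0 {D : Type*} (f2 : D → D → D) (f3 : D → D → D → D)
    (h2 : ∀ x y, f2 x y = f2 y x)
    (h3 : ∀ (σ : Equiv.Perm (Fin 3)) (v : Fin 3 → D),
      f3 (v (σ 0)) (v (σ 1)) (v (σ 2)) = f3 (v 0) (v 1) (v 2)) :
    ∀ (σ : Equiv.Perm (Fin 4)) (v : Fin 4 → D),
      F4 f2 f3 (v (σ 0)) (v (σ 1)) (v (σ 2)) (v (σ 3)) =
        F4 f2 f3 (v 0) (v 1) (v 2) (v 3) := by
  have s12 : ∀ a b c : D, f3 b a c = f3 a b c := by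
    intro a b c
    simpa [Equiv.swap_apply_def] using h3 (Equiv.swap 0 1) ![a, b, c]
  have s13 : ∀ a b c : D, f3 c b a = f3 a b c := by
    intro a b c
    simpa [Equiv.swap_apply_def] using h3 (Equiv.swap 0 2) ![a, b, c]
  have s23 : ∀ a b c : D, f3 a c b = f3 a b c := by
    intro a b c
    simpa [Equiv.swap_apply_def] using h3 (Equiv.swap 1 2) ![a, b, c]
  -- invariance of F4 under each single swap of arguments
  have wx : ∀ a b c d : D, F4 f2 f3 b a c d = F4 f2 f3 a b c d := by
    intro a b c d
    unfold F4
    rw [h2 b a, h2 (f2 b c) (f2 a d), h2 b c, h2 (f2 b d) (f2 a c), h2 b d]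
    exact s23 _ _ _
  have wy : ∀ a b c d : D, F4 f2 f3 c b a d = F4 f2 f3 a b c d := by
    intro a b c d
    unfold F4
    rw [h2 c b, h2 (f2 b c) (f2 a d), h2 c a, h2 b a, h2 (f2 c d) (f2 a b)]
    exact s13 _ _ _
  have wz : ∀ a b c d : D, F4 f2 f3 d b c a = F4 f2 f3 a b c d := by
    intro a b c d
    unfold F4
    rw [h2 d b, h2 (f2 b d) (f2 c a), h2 c a, h2 d c, h2 (f2 c d) (f2 b a),
      h2 b a, h2 d a]
    exact s12 _ _ _
  have xy : ∀ a b c d : D, F4 f2 f3 a c b d = F4 f2 f3 a b c d := by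
    intro a b c d
    unfold F4
    rw [h2 c b]
    exact s12 _ _ _
  have xz : ∀ a b c d : D, F4 f2 f3 a d c b = F4 f2 f3 a b c d := by
    intro a b c d
    unfold F4
    rw [h2 c b, h2 d b, h2 d c]
    exact s13 _ _ _
  have yz : ∀ a b c d : D, F4 f2 f3 a b d c = F4 f2 f3 a b c d := by
    intro a b c d
    unfold F4
    rw [h2 d c]
    exact s23 _ _ _
  have hswap : ∀ (i j : Fin 4) (v : Fin 4 → D),
      F4 f2 f3 (v (Equiv.swap i j 0)) (v (Equiv.swap i j 1))
        (v (Equiv.swap i j 2)) (v (Equiv.swap i j 3)) =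
      F4 f2 f3 (v 0) (v 1) (v 2) (v 3) := by
    intro i j v
    fin_cases i <;> fin_cases j <;> simp [Equiv.swap_apply_def] <;>
      first
        | exact wx _ _ _ _ | exact wy _ _ _ _ | exact wz _ _ _ _
        | exact xy _ _ _ _ | exact xz _ _ _ _ | exact yz _ _ _ _
  intro σ
  refine Equiv.Perm.swap_induction_on σ (fun v => rfl) ?_
  intro τ i j hij IH v
  have h1 : ∀ k : Fin 4, v ((Equiv.swap i j * τ) k) = (v ∘ Equiv.swap i j) (τ k) :=
    fun _ => rfl
  rw [h1 0, h1 1, h1 2, h1 3, IH (v ∘ Equiv.swap i j)]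
  exact hswap i j v
end

section
/- For every k ≥ 1, the k-ary operation fₖ(x₁,…,xₖ) := sgn(x₁ + ⋯ + xₖ) on the domain {-1, 0, 1} lies in the clone generated by the binary operation f(x,y) := sgn(x + y). Equivalently, fₖ can be obtained by finitely many compositions of f and projections. -/
lemma sign_mem (n : ℤ) : n.sign = -1 ∨ n.sign = 0 ∨ n.sign = 1 := by
  cases n with
  | ofNat m => cases m <;> simp [Int.sign]
  | negSucc m => simp [Int.sign]

/-- The three-element domain `{-1, 0, 1} ⊂ ℤ`. -/
abbrev D3 : Type := {x : ℤ // x = -1 ∨ x = 0 ∨ x = 1}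

/-- Membership in the clone generated by a single binary operation `f`:
the smallest collection of finitary operations containing `f` and all
projections and closed under composition. -/
inductive InClone {D : Type*} (f : (Fin 2 → D) → D) :
    {n : ℕ} → ((Fin n → D) → D) → Prop
  | gen : InClone f f
  | proj {n : ℕ} (i : Fin n) : InClone f (fun x => x i)
  | comp {m n : ℕ} (g : (Fin m → D) → D) (h : Fin m → (Fin n → D) → D) :
      InClone f g → (∀ i, InClone f (h i)) →
      InClone f (fun x => g (fun i => h i x))

/-! ### Auxiliary definitions -/

abbrev fD : (Fin 2 → D3) → D3 := fun x => ⟨((x 0).1 + (x 1).1).sign, sign_mem _⟩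

def FS (n : ℕ) : (Fin n → D3) → D3 := fun x => ⟨(∑ i, (x i).1).sign, sign_mem _⟩

def Gdef (n : ℕ) (i : Fin (n + 1)) : (Fin (n + 1) → D3) → D3 :=
  fun y => ⟨((y i).1 + (∑ j : Fin n, (y (i.succAbove j)).1).sign).sign, sign_mem _⟩

/-! ### Sign arithmetic lemmas -/

lemma sgn_pos {a : ℤ} (h : 0 < a) : a.sign = 1 := Int.sign_eq_one_of_pos h

lemma sgn_neg {a : ℤ} (h : a < 0) : a.sign = -1 := Int.sign_eq_neg_one_of_neg h

lemma sgn_nonneg {a : ℤ} (h : 0 ≤ a) : 0 ≤ a.sign := by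
  rcases h.lt_or_eq with h | h
  · rw [sgn_pos h]; norm_num
  · rw [← h]; simp

lemma sgn_nonpos {a : ℤ} (h : a ≤ 0) : a.sign ≤ 0 := by
  rcases h.lt_or_eq with h | h
  · rw [sgn_neg h]; norm_num
  · rw [h]; simp

lemma psi_zero (a : ℤ) (ha : a = -1 ∨ a = 0 ∨ a = 1) :
    (a + ((0 : ℤ) - a).sign).sign = 0 := by
  rcases ha with h | h | h <;> subst h <;> decide

lemma psi_pos (a S : ℤ) (ha : a = -1 ∨ a = 0 ∨ a = 1) (hS : 0 < S) :
    (a + (S - a).sign).sign = if a = -1 then 0 else 1 := by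
  rcases ha with h | h | h <;> subst h
  · rw [if_pos rfl, sgn_pos (a := S - (-1)) (by omega)]; decide
  · rw [if_neg (by norm_num), sub_zero, sgn_pos hS]; decide
  · rw [if_neg (by norm_num)]
    have h0 : 0 ≤ (S - 1).sign := sgn_nonneg (by omega)
    have h1 : (S - 1).sign = -1 ∨ (S - 1).sign = 0 ∨ (S - 1).sign = 1 := sign_mem _
    exact sgn_pos (by omega)

lemma psi_neg (a S : ℤ) (ha : a = -1 ∨ a = 0 ∨ a = 1) (hS : S < 0) :
    (a + (S - a).sign).sign = if a = 1 then 0 else -1 := by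
  rcases ha with h | h | h <;> subst h
  · rw [if_neg (by norm_num)]
    have h0 : (S - (-1)).sign ≤ 0 := sgn_nonpos (by omega)
    have h1 : (S - (-1)).sign = -1 ∨ (S - (-1)).sign = 0 ∨ (S - (-1)).sign = 1 := sign_mem _
    exact sgn_neg (by omega)
  · rw [if_neg (by norm_num), sub_zero, sgn_neg hS]; decide
  · rw [if_pos rfl, sgn_neg (a := S - 1) (by omega)]; decide

/-- The core combinatorial fact: one step of `ψ` after another yields the
constant vector `sgn (∑ y)`. -/
lemma key {N : ℕ} (y z : Fin N → ℤ) (hy : ∀ i, y i = -1 ∨ y i = 0 ∨ y i = 1)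
    (hz : ∀ j, z j = (y j + ((∑ t, y t) - y j).sign).sign) (i : Fin N) :
    (z i + ((∑ t, z t) - z i).sign).sign = (∑ t, y t).sign := by
  set S := ∑ t, y t with hS
  rcases lt_trichotomy S 0 with h | h | h
  · -- S < 0
    have hzj : ∀ j, z j = if y j = 1 then 0 else -1 := fun j => by
      rw [hz j]; exact psi_neg _ _ (hy j) h
    obtain ⟨j₀, hj₀⟩ : ∃ j, y j = -1 := by
      by_contra hc
      push_neg at hc
      have h0 : 0 ≤ S := by
        rw [hS]
        refine Finset.sum_nonneg fun j _ => ?_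
        rcases hy j with h1 | h1 | h1
        · exact absurd h1 (hc j)
        · omega
        · omega
      omega
    have hz0 : ∀ j, -1 ≤ z j ∧ z j ≤ 0 := fun j => by
      rw [hzj j]; split <;> omega
    have hzj₀ : z j₀ = -1 := by
      rw [hzj j₀, if_neg (by omega)]
    have hT : (∑ t, z t) ≤ -1 := by
      have e : (∑ t, z t) = z j₀ + ∑ t ∈ Finset.univ.erase j₀, z t :=
        (Finset.add_sum_erase _ _ (Finset.mem_univ j₀)).symm
      have h2 : (∑ t ∈ Finset.univ.erase j₀, z t) ≤ 0 :=
        Finset.sum_nonpos fun j _ => (hz0 j).2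
      omega
    have hzi := hz0 i
    have hsgn : ((∑ t, z t) - z i).sign ≤ 0 := sgn_nonpos (by omega)
    have hsgn1 : ((∑ t, z t) - z i).sign = -1 ∨ ((∑ t, z t) - z i).sign = 0
        ∨ ((∑ t, z t) - z i).sign = 1 := sign_mem _
    have hzi' : z i = -1 ∨ z i = 0 := by
      rw [hzj i]; split
      · right; rfl
      · left; rfl
    have : z i + ((∑ t, z t) - z i).sign < 0 := by
      rcases hzi' with h' | h'
      · omega
      · rw [h', sub_zero] at *
        have := sgn_neg (a := ∑ t, z t) (by omega)
        omega
    rw [sgn_neg this, sgn_neg h]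
  · -- S = 0
    have hzj : ∀ j, z j = 0 := fun j => by
      rw [hz j, h]
      exact psi_zero _ (hy j)
    have hT : (∑ t, z t) = 0 := Finset.sum_eq_zero fun j _ => hzj j
    rw [hzj i, hT, h]
    decide
  · -- 0 < S
    have hzj : ∀ j, z j = if y j = -1 then 0 else 1 := fun j => by
      rw [hz j]; exact psi_pos _ _ (hy j) h
    obtain ⟨j₀, hj₀⟩ : ∃ j, y j = 1 := by
      by_contra hc
      push_neg at hc
      have h0 : S ≤ 0 := by
        rw [hS]
        refine Finset.sum_nonpos fun j _ => ?_
        rcases hy j with h1 | h1 | h1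
        · omega
        · omega
        · exact absurd h1 (hc j)
      omega
    have hz0 : ∀ j, 0 ≤ z j ∧ z j ≤ 1 := fun j => by
      rw [hzj j]; split <;> omega
    have hzj₀ : z j₀ = 1 := by
      rw [hzj j₀, if_neg (by omega)]
    have hT : 1 ≤ (∑ t, z t) := by
      have e : (∑ t, z t) = z j₀ + ∑ t ∈ Finset.univ.erase j₀, z t :=
        (Finset.add_sum_erase _ _ (Finset.mem_univ j₀)).symm
      have h2 : 0 ≤ (∑ t ∈ Finset.univ.erase j₀, z t) :=
        Finset.sum_nonneg fun j _ => (hz0 j).1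
      omega
    have hzi := hz0 i
    have hsgn : 0 ≤ ((∑ t, z t) - z i).sign := sgn_nonneg (by omega)
    have hzi' : z i = 0 ∨ z i = 1 := by
      rw [hzj i]; split
      · left; rfl
      · right; rfl
    have : 0 < z i + ((∑ t, z t) - z i).sign := by
      rcases hzi' with h' | h'
      · rw [h', sub_zero] at *
        have := sgn_pos (a := ∑ t, z t) (by omega)
        omega
      · omega
    rw [sgn_pos this, sgn_pos h]

/-! ### Clone lemmas -/

lemma clone_pair {n : ℕ} (p q : (Fin n → D3) → D3)
    (hp : InClone fD p) (hq : InClone fD q) :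
    InClone fD (fun y => ⟨((p y).1 + (q y).1).sign, sign_mem _⟩) := by
  have h := InClone.comp (f := fD) fD (fun j => if j = 0 then p else q) InClone.gen
    (fun j => by
      fin_cases j
      · simpa using hp
      · simpa using hq)
  have e : (fun x => fD (fun i => (if i = 0 then p else q) x)) =
      (fun y => (⟨((p y).1 + (q y).1).sign, sign_mem _⟩ : D3)) := by
    funext y
    apply Subtype.ext
    simp [fD, show (1 : Fin 2) ≠ 0 by decide]
  rw [← e]
  exact h

lemma clone_G {n : ℕ} (hn : InClone fD (FS n)) (i : Fin (n + 1)) :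
    InClone fD (Gdef n i) := by
  have h1 : InClone fD (fun y : Fin (n + 1) → D3 => FS n (fun j => y (i.succAbove j))) :=
    InClone.comp (FS n) (fun j y => y (i.succAbove j)) hn (fun j => InClone.proj _)
  exact clone_pair (fun y => y i) (fun y => FS n (fun j => y (i.succAbove j)))
    (InClone.proj i) h1

lemma sum_succAbove {n : ℕ} (w : Fin (n + 1) → ℤ) (i : Fin (n + 1)) :
    ∑ j : Fin n, w (i.succAbove j) = (∑ t, w t) - w i := by
  rw [Fin.sum_univ_succAbove w i]; ring

theorem stmt_1 :
    ∀ k : ℕ, 1 ≤ k →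
      InClone (fun x : Fin 2 → D3 => ⟨((x 0).1 + (x 1).1).sign, sign_mem _⟩)
        (fun x : Fin k → D3 => ⟨(∑ i, (x i).1).sign, sign_mem _⟩) := by
  intro k hk
  show InClone fD (FS k)
  induction k, hk using Nat.le_induction with
  | base =>
    have e : FS 1 = (fun x : Fin 1 → D3 => x 0) := by
      funext x
      apply Subtype.ext
      show (∑ i : Fin 1, (x i).1).sign = (x 0).1
      rw [Fin.sum_univ_one]
      rcases (x 0).2 with h | h | h <;> rw [h] <;> decide
    rw [e]
    exact InClone.proj 0
  | succ n hn ih =>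
    have hG : ∀ i, InClone fD (Gdef n i) := clone_G ih
    have hcomp := InClone.comp (Gdef n 0) (Gdef n) (hG 0) hG
    have e : FS (n + 1) = (fun x => Gdef n 0 (fun i => Gdef n i x)) := by
      funext x
      apply Subtype.ext
      show (∑ i, (x i).1).sign =
        ((Gdef n 0 (fun i => Gdef n i x)).1)
      have hzval : ∀ i : Fin (n + 1), (Gdef n i x).1 =
          ((x i).1 + ((∑ t, (x t).1) - (x i).1).sign).sign := by
        intro i
        show ((x i).1 + (∑ j : Fin n, (x (i.succAbove j)).1).sign).sign = _
        rw [sum_succAbove (fun t => (x t).1) i]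
      have houter : (Gdef n 0 (fun i => Gdef n i x)).1 =
          ((Gdef n 0 x).1 + ((∑ t, (Gdef n t x).1) - (Gdef n 0 x).1).sign).sign := by
        show ((Gdef n 0 x).1 + (∑ j : Fin n, (Gdef n ((0 : Fin (n+1)).succAbove j) x).1).sign).sign = _
        rw [sum_succAbove (fun t => (Gdef n t x).1) 0]
      rw [houter]
      exact (key (fun t => (x t).1) (fun t => (Gdef n t x).1)
        (fun t => (x t).2) hzval 0).symm
    rw [e]
    exact hcomp
end

section
/- On the domain ℤ/pℤ with p an odd prime, for every integer a, the unary-in-two-variables operation (x,y) ↦ a·x − (a−1)·y (mod p) lies in the clone generated by the averaging operation f(x,y) := 2⁻¹·(x+y) (mod p). -/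
/-!
The coefficients `c` for which `x ↦ c x₀ - (c - 1) x₁` lies in the clone of the midpoint
operation include `1` and `0` (the projections) and are closed under `c, d ↦ (c + d) / 2`, so they
include every dyadic `k / 2 ^ N` with `k ≤ 2 ^ N`. Over `ZMod p`, Fermat gives
`2 ^ (p - 1) = 1`, and every residue is such a `k` for `N = p - 1`.
-/

def midpointOp (K : Type*) [Field K] (x : Fin 2 → K) : K := (2 : K)⁻¹ * (x 0 + x 1)

section AffineComb

variable {K : Type*} [Field K]

def affineComb (c : K) (x : Fin 2 → K) : K := c * x 0 - (c - 1) * x 1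

lemma inClone_affineComb_zero : InClone (midpointOp K) (affineComb (0 : K)) := by
  convert InClone.proj (f := midpointOp K) (1 : Fin 2) using 1
  funext x
  simp [affineComb]

lemma inClone_affineComb_one : InClone (midpointOp K) (affineComb (1 : K)) := by
  convert InClone.proj (f := midpointOp K) (0 : Fin 2) using 1
  funext x
  simp [affineComb]

lemma inClone_affineComb_midpoint (h2 : (2 : K) ≠ 0) {c d : K}
    (hc : InClone (midpointOp K) (affineComb c)) (hd : InClone (midpointOp K) (affineComb d)) :
    InClone (midpointOp K) (affineComb ((c + d) / 2)) := by
  have H := InClone.comp _ ![affineComb c, affineComb d] InClone.gen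
    (fun i => by fin_cases i <;> assumption)
  convert H using 1
  funext x
  simp only [midpointOp, affineComb, Matrix.cons_val_zero, Matrix.cons_val_one]
  field_simp
  ring

lemma inClone_affineComb_dyadic (h2 : (2 : K) ≠ 0) (N : ℕ) :
    ∀ k : ℕ, k ≤ 2 ^ N → InClone (midpointOp K) (affineComb ((k : K) / 2 ^ N)) := by
  induction N with
  | zero =>
    intro k hk
    interval_cases k
    · simpa using inClone_affineComb_zero
    · simpa using inClone_affineComb_one
  | succ N ih =>
    intro k hk
    obtain ⟨i, j, hi, hj, rfl⟩ : ∃ i j, i ≤ 2 ^ N ∧ j ≤ 2 ^ N ∧ k = i + j :=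
      ⟨min k (2 ^ N), k - min k (2 ^ N), by omega, by rw [pow_succ] at hk; omega, by omega⟩
    convert inClone_affineComb_midpoint h2 (ih i hi) (ih j hj) using 2
    push_cast
    ring

end AffineComb

theorem stmt_3 (p : ℕ) (hp : p.Prime) (hodd : Odd p) (a : ℤ) :
    InClone (fun x : Fin 2 → ZMod p => (2 : ZMod p)⁻¹ * (x 0 + x 1))
      (fun x : Fin 2 → ZMod p => (a : ZMod p) * x 0 - ((a : ZMod p) - 1) * x 1) := by
  have := Fact.mk hp
  have h2 : (2 : ZMod p) ≠ 0 := Ring.two_ne_zero <| by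
    rw [ZMod.ringChar_zmod_n]
    rintro rfl
    exact Nat.not_odd_iff_even.mpr even_two hodd
  have hval : (a : ZMod p).val ≤ 2 ^ (p - 1) := by
    have := ZMod.val_lt (a : ZMod p)
    have := (p - 1).lt_two_pow_self
    omega
  have H := inClone_affineComb_dyadic h2 (p - 1) _ hval
  rwa [ZMod.pow_card_sub_one_eq_one h2, div_one, ZMod.natCast_zmod_val] at H
end

section
/- Let R ⊆ A × A be a binary relation on a finite set A such that every subset B ⊆ A with B + R = B also satisfies B − R = B, where B + R := {y : ∃ x ∈ B, (x,y) ∈ R} and B − R := {x : ∃ y ∈ B, (x,y) ∈ R}. Suppose further that R is subdirect (both projections are all of A). Then, viewing R as the edge set of a directed graph on A, every weakly connected component of this graph is strongly connected. -/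
/-- Forward image `B + R` of a set under a binary relation. -/
def relImage {A : Type*} (R : A → A → Prop) (B : Set A) : Set A :=
  {y | ∃ x ∈ B, R x y}

/-- Preimage `B − R` of a set under a binary relation. -/
def relPreimage {A : Type*} (R : A → A → Prop) (B : Set A) : Set A :=
  {x | ∃ y ∈ B, R x y}

lemma key_rev {A : Type*} [Fintype A] (R : A → A → Prop)
    (hsub₁ : ∀ x, ∃ y, R x y)
    (hrev : ∀ B : Set A, relImage R B = B → relPreimage R B = B)
    {x y : A} (h : R y x) : Relation.ReflTransGen R x y := by
  classical
  set f : ℕ → Set A := fun n => (relImage R)^[n] {x} with hf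
  have hfs : ∀ n, f (n + 1) = relImage R (f n) := by
    intro n; simp [hf, Function.iterate_succ_apply']
  have hne : ∀ n, (f n).Nonempty := by
    intro n
    induction n with
    | zero => exact ⟨x, rfl⟩
    | succ n ih =>
      obtain ⟨z, hz⟩ := ih
      obtain ⟨w, hw⟩ := hsub₁ z
      rw [hfs]
      exact ⟨w, z, hz, hw⟩
  have hreach : ∀ n z, z ∈ f n → Relation.ReflTransGen R x z := by
    intro n
    induction n with
    | zero => intro z hz; cases hz; exact .refl
    | succ n ih =>
      intro z hz
      rw [hfs] at hz
      obtain ⟨w, hw, hR⟩ := hz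
      exact (ih w hw).tail hR
  -- find n < m with f n = f m
  have : ∃ n m : ℕ, n < m ∧ f n = f m := by
    obtain ⟨a, b, hne', hab⟩ := Finite.exists_ne_map_eq_of_infinite f
    rcases lt_or_gt_of_ne hne' with h | h
    · exact ⟨a, b, h, hab⟩
    · exact ⟨b, a, h, hab.symm⟩
  obtain ⟨n, m, hnm, hfnm⟩ := this
  set U : Set A := ⋃ k ∈ Finset.Ico n m, f k with hU
  have hmemU : ∀ z, z ∈ U ↔ ∃ k, n ≤ k ∧ k < m ∧ z ∈ f k := by
    intro z
    simp [hU, Finset.mem_Ico, and_assoc]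
  have himg : relImage R U = U := by
    ext z
    constructor
    · rintro ⟨w, hw, hR⟩
      obtain ⟨k, hk1, hk2, hk3⟩ := (hmemU w).1 hw
      have hz : z ∈ f (k + 1) := by rw [hfs]; exact ⟨w, hk3, hR⟩
      rcases lt_or_eq_of_le (Nat.succ_le_of_lt hk2) with h | h
      · exact (hmemU z).2 ⟨k + 1, Nat.le_succ_of_le hk1, h, hz⟩
      · refine (hmemU z).2 ⟨n, le_refl n, hnm, ?_⟩
        rw [hfnm, ← h]; exact hz
    · intro hz
      obtain ⟨k, hk1, hk2, hk3⟩ := (hmemU z).1 hz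
      rcases Nat.eq_or_lt_of_le hk1 with h | h
      · -- k = n, use f n = f m = relImage R (f (m-1))
        have hm : m - 1 + 1 = m := by omega
        have hz' : z ∈ relImage R (f (m - 1)) := by
          rw [← hfs, hm, ← hfnm, h]; exact hk3
        obtain ⟨w, hw, hR⟩ := hz'
        refine ⟨w, (hmemU w).2 ⟨m - 1, ?_, ?_, hw⟩, hR⟩
        · omega
        · omega
      · have hz' : z ∈ relImage R (f (k - 1)) := by
          rw [← hfs, show k - 1 + 1 = k by omega]
          exact hk3
        obtain ⟨w, hw, hR⟩ := hz'
        exact ⟨w, (hmemU w).2 ⟨k - 1, by omega, by omega, hw⟩, hR⟩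
  have hpre : relPreimage R U = U := hrev U himg
  -- U is closed under taking ancestors
  have hback : ∀ w z : A, Relation.ReflTransGen R w z → z ∈ U → w ∈ U := by
    intro w z hwz
    induction hwz using Relation.ReflTransGen.head_induction_on with
    | refl => exact id
    | head hR _ ih =>
      intro hz
      have := ih hz
      rw [← hpre]
      exact ⟨_, this, hR⟩
  have hxU : x ∈ U := by
    obtain ⟨z, hz⟩ := hne n
    exact hback x z (hreach n z hz) ((hmemU z).2 ⟨n, le_refl n, hnm, hz⟩)
  have hyU : y ∈ U := by
    rw [← hpre]; exact ⟨x, hxU, h⟩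
  obtain ⟨k, _, _, hk⟩ := (hmemU y).1 hyU
  exact hreach k y hk

theorem stmt_7 {A : Type*} [Fintype A] (R : A → A → Prop)
    (hsub₁ : ∀ x, ∃ y, R x y) (hsub₂ : ∀ y, ∃ x, R x y)
    (hrev : ∀ B : Set A, relImage R B = B → relPreimage R B = B) :
    ∀ a b : A, Relation.ReflTransGen (fun x y => R x y ∨ R y x) a b →
      Relation.ReflTransGen R a b := by
  intro a b hab
  induction hab with
  | refl => exact .refl
  | tail _ hedge ih =>
    rcases hedge with h | h
    · exact ih.tail h
    · exact ih.trans (key_rev R hsub₁ hrev h)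
end

section
/- Let R ⊆ A × A be a subdirect binary relation on a finite set A, viewed as a directed graph. If every directed edge of R is contained in a directed cycle, then there exists n ≥ 1 such that R⁻ ⊆ R∘ⁿ, where R⁻ is the reverse relation and R∘ⁿ is the n-fold composition of R with itself. -/
/-- `n`-fold relational composition `R∘ⁿ` (with `R∘⁰` the identity relation). -/
def compPow {A : Type*} (R : A → A → Prop) : ℕ → A → A → Prop
  | 0 => Eq
  | n + 1 => fun x z => ∃ y, R x y ∧ compPow R n y z

theorem compPow_add {A : Type*} {R : A → A → Prop} :
    ∀ {k m : ℕ} {x y z : A}, compPow R k x y → compPow R m y z → compPow R (k + m) x z := by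
  intro k
  induction k with
  | zero =>
    intro m x y z h1 h2
    cases h1
    simpa using h2
  | succ k ih =>
    intro m x y z h1 h2
    obtain ⟨w, hw, h1'⟩ := h1
    have : k + 1 + m = (k + m) + 1 := by omega
    rw [this]
    exact ⟨w, hw, ih h1' h2⟩

theorem compPow_iterate {A : Type*} {R : A → A → Prop} {c : ℕ} {x : A}
    (h : compPow R c x x) : ∀ t : ℕ, compPow R (t * c) x x := by
  intro t
  induction t with
  | zero => rw [Nat.zero_mul]; exact rfl
  | succ t ih =>
    have : (t + 1) * c = t * c + c := by ring
    rw [this]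
    exact compPow_add ih h

theorem reach_compPow {A : Type*} {R : A → A → Prop} {x y : A}
    (h : Relation.ReflTransGen R x y) : ∃ k, compPow R k x y := by
  induction h with
  | refl => exact ⟨0, rfl⟩
  | tail _ hbc ih =>
    obtain ⟨k, hk⟩ := ih
    exact ⟨k + 1, compPow_add hk ⟨_, hbc, rfl⟩⟩

theorem stmt_8 {A : Type*} [Fintype A] (R : A → A → Prop)
    (hsub₁ : ∀ x, ∃ y, R x y) (hsub₂ : ∀ y, ∃ x, R x y)
    (hcyc : ∀ a b, R a b → Relation.ReflTransGen R b a) :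
    ∃ n : ℕ, 1 ≤ n ∧ ∀ x y, R y x → compPow R n x y := by
  classical
  have step : ∀ p : A × A, ∃ k : ℕ,
      R p.2 p.1 → compPow R k p.1 p.2 ∧ compPow R (k + 1) p.1 p.1 := by
    rintro ⟨x, y⟩
    by_cases h : R y x
    · obtain ⟨k, hk⟩ := reach_compPow (hcyc y x h)
      exact ⟨k, fun _ => ⟨hk, compPow_add hk ⟨x, h, rfl⟩⟩⟩
    · exact ⟨0, fun h' => absurd h' h⟩
  choose f hf using step
  set L := ∏ p : A × A, (f p + 1) with hL
  have hLpos : 0 < L := Finset.prod_pos (fun p _ => Nat.succ_pos _)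
  refine ⟨2 * L - 1, by omega, ?_⟩
  intro x y hR
  obtain ⟨h1, h2⟩ := hf (x, y) hR
  set k := f (x, y) with hk
  have hdvd : (k + 1) ∣ L := Finset.dvd_prod_of_mem _ (Finset.mem_univ (x, y))
  obtain ⟨m, hm⟩ := hdvd
  have hm1 : 1 ≤ m := by
    rcases Nat.eq_zero_or_pos m with h0 | h0
    · rw [h0, mul_zero] at hm; omega
    · exact h0
  have closed : compPow R ((2 * m - 1) * (k + 1)) x x := compPow_iterate h2 _
  have key := compPow_add closed h1
  have e1 : (2 * m - 1) * (k + 1) = 2 * m * (k + 1) - (k + 1) := by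
    rw [Nat.sub_one_mul]
  have e2 : 2 * m * (k + 1) = 2 * L := by rw [hm]; ring
  have hLk : k + 1 ≤ L := by
    calc k + 1 = (k + 1) * 1 := by ring
    _ ≤ (k + 1) * m := Nat.mul_le_mul_left _ hm1
    _ = L := hm.symm
  have heq : (2 * m - 1) * (k + 1) + k = 2 * L - 1 := by omega
  rwa [heq] at key
end

section
/- Let R ⊆ A × A be a binary relation on a finite set A and suppose there is n ≥ 1 with R⁻ ⊆ R∘ⁿ. Then for every B ⊆ A, B + R = B implies B − R = B. -/
theorem stmt_9 {A : Type*} [Fintype A] (R : A → A → Prop)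
    (h : ∃ n : ℕ, 1 ≤ n ∧ ∀ x y, R y x → compPow R n x y) :
    ∀ B : Set A, relImage R B = B → relPreimage R B = B := by
  intro B hB
  have closed : ∀ x y, x ∈ B → R x y → y ∈ B := by
    intro x y hx hr
    have : y ∈ relImage R B := ⟨x, hx, hr⟩
    rwa [hB] at this
  have chain : ∀ n x y, compPow R n x y → x ∈ B → y ∈ B := by
    intro n
    induction n with
    | zero => intro x y hxy hx; exact hxy ▸ hx
    | succ n ih =>
      rintro x y ⟨z, hxz, hz⟩ hx
      exact ih z y hz (closed x z hx hxz)
  obtain ⟨n, hn1, hR⟩ := h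
  ext x
  constructor
  · rintro ⟨y, hy, hxy⟩
    exact chain n y x (hR y x hxy) hy
  · intro hx
    have hx' : x ∈ relImage R B := by rw [hB]; exact hx
    obtain ⟨x', hxB, hr⟩ := hx'
    have hc := hR x x' hr
    obtain ⟨m, rfl⟩ : ∃ m, n = m + 1 := ⟨n - 1, by omega⟩
    obtain ⟨y, hxy, _⟩ := hc
    exact ⟨y, closed x y hx hxy, hxy⟩
end

section
/- Let R ⊆ A × A be a binary relation on a finite set A and suppose there exists a function p : A × A → ℝ with p(a,b) > 0 for (a,b) ∈ R, p(a,b) = 0 otherwise, whose two marginals agree: for every b, Σₐ p(a,b) = Σ_c p(b,c). Then for every B ⊆ A, B + R = B implies B − R = B. -/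
theorem stmt_10 {A : Type*} [Fintype A] (R : A → A → Prop)
    (p : A × A → ℝ)
    (hpos : ∀ a b, R a b → 0 < p (a, b))
    (hzero : ∀ a b, ¬ R a b → p (a, b) = 0)
    (hmarg : ∀ b, ∑ a, p (a, b) = ∑ c, p (b, c)) :
    ∀ B : Set A, relImage R B = B → relPreimage R B = B := by
  classical
  intro B hB
  have hnn : ∀ a b, 0 ≤ p (a, b) := by
    intro a b
    by_cases h : R a b
    · exact (hpos a b h).le
    · exact (hzero a b h).ge
  -- edges out of B stay in B
  have hout : ∀ a ∈ B, ∀ c, c ∉ B → p (a, c) = 0 := by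
    intro a ha c hc
    by_cases h : R a c
    · exact absurd (hB ▸ (⟨a, ha, h⟩ : c ∈ relImage R B)) hc
    · exact hzero a c h
  set Bf : Finset A := B.toFinset with hBf
  have hmem : ∀ x, x ∈ Bf ↔ x ∈ B := by intro x; simp [hBf]
  -- total flow identity
  have h1 : ∑ b ∈ Bf, ∑ a, p (a, b) = ∑ b ∈ Bf, ∑ c, p (b, c) := by
    exact Finset.sum_congr rfl fun b _ => hmarg b
  have h2 : ∀ b ∈ Bf, ∑ c, p (b, c) = ∑ c ∈ Bf, p (b, c) := by
    intro b hb
    symm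
    apply Finset.sum_subset (Finset.subset_univ _)
    intro c _ hc
    exact hout b ((hmem b).mp hb) c (fun h => hc ((hmem c).mpr h))
  have h3 : ∑ b ∈ Bf, ∑ a, p (a, b)
      = ∑ a ∈ Bf, ∑ b ∈ Bf, p (a, b) + ∑ a ∈ Bfᶜ, ∑ b ∈ Bf, p (a, b) := by
    rw [Finset.sum_comm, ← Finset.sum_add_sum_compl Bf (fun a => ∑ b ∈ Bf, p (a, b))]
  have hzero' : ∑ a ∈ Bfᶜ, ∑ b ∈ Bf, p (a, b) = 0 := by
    have := h1
    rw [h3, Finset.sum_congr rfl h2] at this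
    linarith
  -- hence: no edge from outside B into B
  have hcross : ∀ a, a ∉ B → ∀ b ∈ B, ¬ R a b := by
    intro a ha b hb hR
    have hterm : ∑ b ∈ Bf, p (a, b) = 0 := by
      have := (Finset.sum_eq_zero_iff_of_nonneg
        (fun a _ => Finset.sum_nonneg fun b _ => hnn a b)).mp hzero' a
        (by simp [hBf, ha])
      exact this
    have := (Finset.sum_eq_zero_iff_of_nonneg (fun b _ => hnn a b)).mp hterm b
      ((hmem b).mpr hb)
    exact absurd this (hpos a b hR).ne'
  ext x
  constructor
  · rintro ⟨y, hy, hR⟩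
    by_contra hx
    exact hcross x hx y hy hR
  · intro hx
    -- x ∈ B has an incoming edge from B, so positive column sum, so positive row sum
    obtain ⟨a, ha, hR⟩ : x ∈ relImage R B := hB.symm ▸ hx
    have hcol : 0 < ∑ c, p (x, c) := by
      rw [← hmarg x]
      exact Finset.sum_pos' (fun i _ => hnn i x) ⟨a, Finset.mem_univ a, hpos a x hR⟩
    obtain ⟨c, -, hc⟩ := Finset.exists_lt_of_sum_lt (f := fun _ => (0:ℝ))
      (by simpa using hcol)
    have hRc : R x c := by
      by_contra h
      rw [hzero x c h] at hc; exact lt_irrefl _ hc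
    exact ⟨c, hB ▸ (⟨x, hx, hRc⟩ : c ∈ relImage R B), hRc⟩
end

section
/- Let R ⊆ A × A be a subdirect binary relation on a finite set A, viewed as a directed graph, such that every edge lies on a directed cycle. Then there exists a probability distribution p on R with full support (p(a,b) > 0 for all (a,b) ∈ R) whose marginal on the first coordinate equals its marginal on the second coordinate. -/
open Finset

lemma ite_pair_sum₁ {A : Type*} [Fintype A] [DecidableEq A] (a c d : A) :
    ∑ b, (if (a, b) = (c, d) then (1:ℤ) else 0) = if a = c then 1 else 0 := by
  by_cases h : a = c <;> simp [h, Prod.ext_iff]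

lemma ite_pair_sum₂ {A : Type*} [Fintype A] [DecidableEq A] (a c d : A) :
    ∑ b, (if (b, a) = (c, d) then (1:ℤ) else 0) = if a = d then 1 else 0 := by
  by_cases h : a = d <;> simp [h, Prod.ext_iff]

lemma flow_lemma {A : Type*} [Fintype A] [DecidableEq A] (R : A → A → Prop)
    {x y : A} (h : Relation.ReflTransGen R x y) :
    ∃ f : A × A → ℕ, (∀ a b, ¬ R a b → f (a, b) = 0) ∧
      ∀ a, (∑ b, (f (a, b) : ℤ)) - ∑ b, (f (b, a) : ℤ)
        = (if a = x then 1 else 0) - (if a = y then 1 else 0) := by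
  induction h using Relation.ReflTransGen.head_induction_on with
  | refl => exact ⟨0, by simp, by simp⟩
  | @head x' z hxz hzy ih =>
    obtain ⟨f, hf0, hf⟩ := ih
    refine ⟨fun q => f q + if q = (x', z) then 1 else 0, ?_, ?_⟩
    · intro a b hab
      simp only [hf0 a b hab, Nat.zero_add, ite_eq_right_iff]
      rintro ⟨rfl, rfl⟩
      exact (hab hxz).elim
    · intro a
      push_cast
      rw [Finset.sum_add_distrib, Finset.sum_add_distrib, ite_pair_sum₁, ite_pair_sum₂]
      have := hf a
      by_cases h1 : a = x' <;> by_cases h2 : a = z <;>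
        simp [h1, h2] at this ⊢ <;> linarith

theorem stmt_11 {A : Type*} [Fintype A] [Nonempty A] (R : A → A → Prop)
    (hsub₁ : ∀ x, ∃ y, R x y) (hsub₂ : ∀ y, ∃ x, R x y)
    (hcyc : ∀ a b, R a b → Relation.ReflTransGen R b a) :
    ∃ p : A × A → ℝ,
      (∀ a b, R a b → 0 < p (a, b)) ∧
      (∀ a b, ¬ R a b → p (a, b) = 0) ∧
      (∑ q, p q = 1) ∧
      (∀ a, ∑ b, p (a, b) = ∑ b, p (b, a)) := by
  classical
  -- for each edge q, a balanced flow g with g q ≥ 1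
  have key : ∀ q : A × A, R q.1 q.2 → ∃ g : A × A → ℕ,
      (∀ a b, ¬ R a b → g (a, b) = 0) ∧
      (∀ a, (∑ b, (g (a, b) : ℤ)) = ∑ b, (g (b, a) : ℤ)) ∧ 1 ≤ g q := by
    rintro ⟨u, v⟩ huv
    obtain ⟨f, hf0, hf⟩ := flow_lemma R (hcyc u v huv)
    refine ⟨fun q => f q + if q = (u, v) then 1 else 0, ?_, ?_, by simp⟩
    · intro a b hab
      simp only [hf0 a b hab, Nat.zero_add, ite_eq_right_iff]
      rintro ⟨rfl, rfl⟩
      exact (hab huv).elim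
    · intro a
      push_cast
      rw [Finset.sum_add_distrib, Finset.sum_add_distrib, ite_pair_sum₁, ite_pair_sum₂]
      have := hf a
      by_cases h1 : a = u <;> by_cases h2 : a = v <;>
        simp [h1, h2] at this ⊢ <;> linarith
  choose g hg0 hgbal hgpos using key
  set E : Finset (A × A) := Finset.univ.filter (fun q => R q.1 q.2) with hE
  have hmemE : ∀ q : A × A, q ∈ E ↔ R q.1 q.2 := by
    intro q; simp [hE]
  set F : A × A → ℕ := fun q => ∑ e ∈ E.attach, g e.1 ((hmemE e.1).1 e.2) q with hF
  have hF0 : ∀ a b, ¬ R a b → F (a, b) = 0 := by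
    intro a b hab
    exact Finset.sum_eq_zero fun e _ => hg0 _ _ a b hab
  have hFpos : ∀ a b, R a b → 1 ≤ F (a, b) := by
    intro a b hab
    have hm : (⟨(a, b), (hmemE (a, b)).2 hab⟩ : {x // x ∈ E}) ∈ E.attach :=
      Finset.mem_attach _ _
    calc 1 ≤ g (a, b) hab (a, b) := hgpos _ _
      _ ≤ F (a, b) := Finset.single_le_sum (f := fun e : {x // x ∈ E} =>
            g e.1 ((hmemE e.1).1 e.2) (a, b)) (fun _ _ => Nat.zero_le _) hm
  have hFbal : ∀ a, (∑ b, (F (a, b) : ℤ)) = ∑ b, (F (b, a) : ℤ) := by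
    intro a
    simp only [hF]
    push_cast
    rw [Finset.sum_comm, Finset.sum_comm (s := Finset.univ)]
    exact Finset.sum_congr rfl fun e _ => hgbal _ _ a
  -- total mass
  obtain ⟨a₀⟩ := (inferInstance : Nonempty A)
  obtain ⟨b₀, hab₀⟩ := hsub₁ a₀
  set S : ℕ := ∑ q, F q with hS
  have hSpos : 0 < S := by
    have : 1 ≤ F (a₀, b₀) := hFpos _ _ hab₀
    have hle : F (a₀, b₀) ≤ S :=
      Finset.single_le_sum (fun _ _ => Nat.zero_le _) (Finset.mem_univ _)
    omega
  have hSR : (0 : ℝ) < (S : ℝ) := by exact_mod_cast hSpos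
  refine ⟨fun q => (F q : ℝ) / S, ?_, ?_, ?_, ?_⟩
  · intro a b hab
    have h1 : (0:ℝ) < (F (a, b) : ℝ) := by
      exact_mod_cast Nat.lt_of_lt_of_le Nat.zero_lt_one (hFpos a b hab)
    exact div_pos h1 hSR
  · intro a b hab
    simp [hF0 a b hab]
  · rw [← Finset.sum_div]
    rw [div_eq_one_iff_eq (ne_of_gt hSR)]
    push_cast [hS]
    rfl
  · intro a
    have := hFbal a
    rw [← Finset.sum_div, ← Finset.sum_div]
    congr 1
    exact_mod_cast this
end

section
/- The binary subdirect relations on A = {-1,0,1} preserved by the operation f(x,y) = sgn(x+y) are exactly the seven relations: equality {(x,y): x=y}, negation {(x,y): x=−y}, the two orders {(x,y): x≤y} and {(x,y): x≥y}, the two half-planes {(x,y): x+y≥0} and {(x,y): x+y≤0}, and the full relation A²; that is, each of these seven relations is subdirect and preserved by f, and every subdirect relation R ⊆ A² preserved by f equals one of them. -/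
/-- The binary operation `f(x, y) = sgn(x + y)` on `{-1, 0, 1}`. -/
def sgn2 (a b : D3) : D3 := ⟨(a.1 + b.1).sign, sign_mem _⟩

/-- A binary relation is preserved by `sgn2`. -/
def Preserved (R : Set (D3 × D3)) : Prop :=
  ∀ p ∈ R, ∀ q ∈ R, (sgn2 p.1 q.1, sgn2 p.2 q.2) ∈ R

/-- A binary relation is subdirect: both projections are all of `A`. -/
def Subdirect (R : Set (D3 × D3)) : Prop :=
  (∀ a : D3, ∃ b : D3, (a, b) ∈ R) ∧ (∀ b : D3, ∃ a : D3, (a, b) ∈ R)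

def eqR : Set (D3 × D3) := {p | p.1 = p.2}
def negR : Set (D3 × D3) := {p | p.1.1 = -p.2.1}
def leR : Set (D3 × D3) := {p | p.1.1 ≤ p.2.1}
def geR : Set (D3 × D3) := {p | p.2.1 ≤ p.1.1}
def hpR : Set (D3 × D3) := {p | 0 ≤ p.1.1 + p.2.1}
def hmR : Set (D3 × D3) := {p | p.1.1 + p.2.1 ≤ 0}
def fullR : Set (D3 × D3) := Set.univ

/-! ### Boolean-level classification on `Fin 3` -/

def sgn2' (i j : Fin 3) : Fin 3 :=
  if i.val + j.val < 2 then 0 else if i.val + j.val = 2 then 1 else 2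

def eqB : Fin 3 × Fin 3 → Bool := fun q => q.1 = q.2
def negB : Fin 3 × Fin 3 → Bool := fun q => q.1.val + q.2.val = 2
def leB : Fin 3 × Fin 3 → Bool := fun q => q.1 ≤ q.2
def geB : Fin 3 × Fin 3 → Bool := fun q => q.2 ≤ q.1
def hpB : Fin 3 × Fin 3 → Bool := fun q => 2 ≤ q.1.val + q.2.val
def hmB : Fin 3 × Fin 3 → Bool := fun q => q.1.val + q.2.val ≤ 2
def fullB : Fin 3 × Fin 3 → Bool := fun _ => true

abbrev PresB (χ : Fin 3 × Fin 3 → Bool) : Prop :=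
  ∀ p q : Fin 3 × Fin 3, χ p = true → χ q = true →
    χ (sgn2' p.1 q.1, sgn2' p.2 q.2) = true

abbrev SubB (χ : Fin 3 × Fin 3 → Bool) : Prop :=
  (∀ i : Fin 3, ∃ j : Fin 3, χ (i, j) = true) ∧
  (∀ j : Fin 3, ∃ i : Fin 3, χ (i, j) = true)

set_option maxRecDepth 10000 in
lemma keyB : ∀ χ : Fin 3 × Fin 3 → Bool, PresB χ → SubB χ →
    χ = eqB ∨ χ = negB ∨ χ = leB ∨ χ = geB ∨ χ = hpB ∨ χ = hmB ∨ χ = fullB := by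
  decide

/-! ### Transfer between `D3` and `Fin 3` -/

def ofFin : Fin 3 → D3 := fun i => ⟨(i.val : ℤ) - 1, by fin_cases i <;> simp⟩

def toFin : D3 → Fin 3 := fun a => if a.1 = -1 then 0 else if a.1 = 0 then 1 else 2

lemma ofFin_toFin (a : D3) : ofFin (toFin a) = a := by
  obtain ⟨x, rfl | rfl | rfl⟩ := a <;> simp [ofFin, toFin]

lemma ofFin_sgn2' (i j : Fin 3) : ofFin (sgn2' i j) = sgn2 (ofFin i) (ofFin j) := by
  fin_cases i <;> fin_cases j <;> simp [ofFin, sgn2', sgn2] <;> decide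

lemma case_tac (a b : D3) :
    (eqB (toFin a, toFin b) = true ↔ (a, b) ∈ eqR) ∧
    (negB (toFin a, toFin b) = true ↔ (a, b) ∈ negR) ∧
    (leB (toFin a, toFin b) = true ↔ (a, b) ∈ leR) ∧
    (geB (toFin a, toFin b) = true ↔ (a, b) ∈ geR) ∧
    (hpB (toFin a, toFin b) = true ↔ (a, b) ∈ hpR) ∧
    (hmB (toFin a, toFin b) = true ↔ (a, b) ∈ hmR) ∧
    (fullB (toFin a, toFin b) = true ↔ (a, b) ∈ fullR) := by
  obtain ⟨x, rfl | rfl | rfl⟩ := a <;> obtain ⟨y, rfl | rfl | rfl⟩ := b <;>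
    simp [toFin, eqB, negB, leB, geB, hpB, hmB, fullB,
      eqR, negR, leR, geR, hpR, hmR, fullR, Subtype.ext_iff]

theorem stmt_14 :
    (Preserved eqR ∧ Subdirect eqR) ∧
    (Preserved negR ∧ Subdirect negR) ∧
    (Preserved leR ∧ Subdirect leR) ∧
    (Preserved geR ∧ Subdirect geR) ∧
    (Preserved hpR ∧ Subdirect hpR) ∧
    (Preserved hmR ∧ Subdirect hmR) ∧
    (Preserved fullR ∧ Subdirect fullR) ∧
    (∀ R : Set (D3 × D3), Preserved R → Subdirect R →
      R = eqR ∨ R = negR ∨ R = leR ∨ R = geR ∨ R = hpR ∨ R = hmR ∨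
        R = fullR) := by
  refine ⟨?_, ?_, ?_, ?_, ?_, ?_, ?_, ?_⟩
  · constructor
    · rintro ⟨a, b⟩ hp ⟨c, d⟩ hq
      simp only [eqR, Set.mem_setOf_eq] at *
      subst hp; subst hq; rfl
    · exact ⟨fun a => ⟨a, rfl⟩, fun b => ⟨b, rfl⟩⟩
  · constructor
    · rintro ⟨⟨x1, hx1⟩, ⟨y1, hy1⟩⟩ hp ⟨⟨x2, hx2⟩, ⟨y2, hy2⟩⟩ hq
      simp only [negR, Set.mem_setOf_eq, sgn2] at *
      rw [show x1 + x2 = -(y1 + y2) by omega, Int.sign_neg]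
    · constructor
      · rintro ⟨x, hx⟩
        exact ⟨⟨-x, by rcases hx with rfl|rfl|rfl <;> simp⟩, by simp [negR]⟩
      · rintro ⟨y, hy⟩
        exact ⟨⟨-y, by rcases hy with rfl|rfl|rfl <;> simp⟩, by simp [negR]⟩
  · constructor
    · rintro ⟨⟨x1, hx1⟩, ⟨y1, hy1⟩⟩ hp ⟨⟨x2, hx2⟩, ⟨y2, hy2⟩⟩ hq
      simp only [leR, Set.mem_setOf_eq, sgn2] at *
      rcases hx1 with rfl|rfl|rfl <;> rcases hy1 with rfl|rfl|rfl <;>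
        rcases hx2 with rfl|rfl|rfl <;> rcases hy2 with rfl|rfl|rfl <;>
        first | decide | omega
    · exact ⟨fun a => ⟨⟨1, by simp⟩, by rcases a with ⟨x, rfl|rfl|rfl⟩ <;> simp [leR]⟩,
        fun b => ⟨⟨-1, by simp⟩, by rcases b with ⟨y, rfl|rfl|rfl⟩ <;> simp [leR]⟩⟩
  · constructor
    · rintro ⟨⟨x1, hx1⟩, ⟨y1, hy1⟩⟩ hp ⟨⟨x2, hx2⟩, ⟨y2, hy2⟩⟩ hq
      simp only [geR, Set.mem_setOf_eq, sgn2] at *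
      rcases hx1 with rfl|rfl|rfl <;> rcases hy1 with rfl|rfl|rfl <;>
        rcases hx2 with rfl|rfl|rfl <;> rcases hy2 with rfl|rfl|rfl <;>
        first | decide | omega
    · exact ⟨fun a => ⟨⟨-1, by simp⟩, by rcases a with ⟨x, rfl|rfl|rfl⟩ <;> simp [geR]⟩,
        fun b => ⟨⟨1, by simp⟩, by rcases b with ⟨y, rfl|rfl|rfl⟩ <;> simp [geR]⟩⟩
  · constructor
    · rintro ⟨⟨x1, hx1⟩, ⟨y1, hy1⟩⟩ hp ⟨⟨x2, hx2⟩, ⟨y2, hy2⟩⟩ hq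
      simp only [hpR, Set.mem_setOf_eq, sgn2] at *
      rcases hx1 with rfl|rfl|rfl <;> rcases hy1 with rfl|rfl|rfl <;>
        rcases hx2 with rfl|rfl|rfl <;> rcases hy2 with rfl|rfl|rfl <;>
        first | decide | omega
    · exact ⟨fun a => ⟨⟨1, by simp⟩, by rcases a with ⟨x, rfl|rfl|rfl⟩ <;> simp [hpR]⟩,
        fun b => ⟨⟨1, by simp⟩, by rcases b with ⟨y, rfl|rfl|rfl⟩ <;> simp [hpR]⟩⟩
  · constructor
    · rintro ⟨⟨x1, hx1⟩, ⟨y1, hy1⟩⟩ hp ⟨⟨x2, hx2⟩, ⟨y2, hy2⟩⟩ hq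
      simp only [hmR, Set.mem_setOf_eq, sgn2] at *
      rcases hx1 with rfl|rfl|rfl <;> rcases hy1 with rfl|rfl|rfl <;>
        rcases hx2 with rfl|rfl|rfl <;> rcases hy2 with rfl|rfl|rfl <;>
        first | decide | omega
    · exact ⟨fun a => ⟨⟨-1, by simp⟩, by rcases a with ⟨x, rfl|rfl|rfl⟩ <;> simp [hmR]⟩,
        fun b => ⟨⟨-1, by simp⟩, by rcases b with ⟨y, rfl|rfl|rfl⟩ <;> simp [hmR]⟩⟩
  · exact ⟨fun _ _ _ _ => trivial, ⟨fun a => ⟨a, trivial⟩, fun b => ⟨b, trivial⟩⟩⟩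
  · intro R hPres hSub
    classical
    set χ : Fin 3 × Fin 3 → Bool :=
      fun q => decide ((ofFin q.1, ofFin q.2) ∈ R) with hχdef
    have hmem : ∀ a b : D3, (a, b) ∈ R ↔ χ (toFin a, toFin b) = true := by
      intro a b
      simp only [hχdef, decide_eq_true_eq, ofFin_toFin]
    have hmem' : ∀ i j : Fin 3, χ (i, j) = true ↔ (ofFin i, ofFin j) ∈ R := by
      intro i j; simp only [hχdef, decide_eq_true_eq]
    have hP : PresB χ := by
      rintro ⟨i, j⟩ ⟨k, l⟩ hp hq
      rw [hmem'] at hp hq ⊢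
      rw [ofFin_sgn2', ofFin_sgn2']
      exact hPres _ hp _ hq
    have hS : SubB χ := by
      constructor
      · intro i
        obtain ⟨b, hb⟩ := hSub.1 (ofFin i)
        exact ⟨toFin b, by rw [hmem', ofFin_toFin]; exact hb⟩
      · intro j
        obtain ⟨a, ha⟩ := hSub.2 (ofFin j)
        exact ⟨toFin a, by rw [hmem', ofFin_toFin]; exact ha⟩
    have hmemB := case_tac
    rcases keyB χ hP hS with h | h | h | h | h | h | h
    · exact Or.inl (by ext ⟨a, b⟩; rw [hmem a b, h]; exact (hmemB a b).1)
    · exact Or.inr (Or.inl (by ext ⟨a, b⟩; rw [hmem a b, h]; exact (hmemB a b).2.1))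
    · exact Or.inr (Or.inr (Or.inl (by ext ⟨a, b⟩; rw [hmem a b, h]; exact (hmemB a b).2.2.1)))
    · exact Or.inr (Or.inr (Or.inr (Or.inl (by ext ⟨a, b⟩; rw [hmem a b, h]; exact (hmemB a b).2.2.2.1))))
    · exact Or.inr (Or.inr (Or.inr (Or.inr (Or.inl (by ext ⟨a, b⟩; rw [hmem a b, h]; exact (hmemB a b).2.2.2.2.1)))))
    · exact Or.inr (Or.inr (Or.inr (Or.inr (Or.inr (Or.inl (by ext ⟨a, b⟩; rw [hmem a b, h]; exact (hmemB a b).2.2.2.2.2.1))))))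
    · exact Or.inr (Or.inr (Or.inr (Or.inr (Or.inr (Or.inr (by ext ⟨a, b⟩; rw [hmem a b, h]; exact (hmemB a b).2.2.2.2.2.2))))))
end
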